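/- arXiv:cs/0602032 — 5 statements merged into one kernel-verified Lean document; each statement's English description precedes it below -/
import Mathlib

section
/- The logarithmic dispersion is symmetric: for all probability measures π, μ on {1,...,n}, δ(π,μ) ≤ δ(μ,π) (and hence δ(π,μ) = δ(μ,π)). -/
/-! If a column-stochastic `A` maps `q` to `p`, its Bayesian reversal `A'ᵢⱼ = Aⱼᵢ qᵢ / pⱼ` maps
`p` to `q` and has the transposed support pattern, so it obeys the same row and column bound `m`.
Only the columns `j` with `pⱼ = 0` need care: they are sent to distinct unit vectors `e_{σ j}`,
placed in rows of `A'` that still have fewer than `m` nonzero entries. Enough such rows exist by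
double counting: the rows `j` with `pⱼ ≠ 0` contribute at most `m` entries each, so at most
`#{j | pⱼ ≠ 0}` rows of `A'` are already full. -/

open scoped BigOperators
open Classical Filter

/-- Shannon entropy (base-2 logarithms), with the convention 0 · log(1/0) = 0. -/
noncomputable def shannonEntropy {Ω : Type*} [Fintype Ω] (p : Ω → ℝ) : ℝ :=
  ∑ w, (if p w = 0 then 0 else p w * Real.logb 2 (p w)⁻¹)

/-- `p` is a probability measure on the finite set `Ω`. -/
def IsProbVec {Ω : Type*} [Fintype Ω] (p : Ω → ℝ) : Prop :=
  (∀ w, 0 ≤ p w) ∧ ∑ w, p w = 1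

/-- `A` is a nonnegative column-stochastic matrix mapping `p` to `q` with at most `m`
nonzero entries in each row and in each column. -/
def DispWitness {Ω : Type*} [Fintype Ω] (m : ℕ) (A : Matrix Ω Ω ℝ) (p q : Ω → ℝ) : Prop :=
  (∀ i j, 0 ≤ A i j) ∧ (∀ j, ∑ i, A i j = 1) ∧ A.mulVec p = q ∧
  (∀ i, (Finset.univ.filter fun j => A i j ≠ 0).card ≤ m) ∧
  (∀ j, (Finset.univ.filter fun i => A i j ≠ 0).card ≤ m)

/-- Logarithmic dispersion δ(p,q) = log m for the least witness bound m. -/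
noncomputable def logDisp {Ω : Type*} [Fintype Ω] (p q : Ω → ℝ) : ℝ :=
  Real.logb 2 ((sInf {m : ℕ | 0 < m ∧ ∃ A, DispWitness m A p q} : ℕ) : ℝ)

/-- The empirical distribution of the first `n` disjoint `l`-blocks of `S`. -/
noncomputable def blockFreq (k l : ℕ) (S : ℕ → Fin k) (n : ℕ) : (Fin l → Fin k) → ℝ :=
  fun w => (((Finset.range n).filter fun j => ∀ t : Fin l, S (j * l + (t : ℕ)) = w t).card : ℝ) / n

/-- Finite-state dimension via block entropy rates. -/
noncomputable def dimFS (k : ℕ) (S : ℕ → Fin k) : ℝ :=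
  ⨅ l : ℕ+, (1 / ((l : ℝ) * Real.logb 2 k)) *
    Filter.liminf (fun n => shannonEntropy (blockFreq k l S n)) Filter.atTop

/-- Finite-state strong dimension via block entropy rates. -/
noncomputable def DimFS (k : ℕ) (S : ℕ → Fin k) : ℝ :=
  ⨅ l : ℕ+, (1 / ((l : ℝ) * Real.logb 2 k)) *
    Filter.limsup (fun n => shannonEntropy (blockFreq k l S n)) Filter.atTop

/-- `S` is a base-`k` expansion of the real number `x ∈ [0,1]`. -/
def IsExpansion (k : ℕ) (S : ℕ → Fin k) (x : ℝ) : Prop :=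
  x = ∑' n : ℕ, (S n : ℝ) / (k : ℝ) ^ (n + 1)

open Finset

section Counting

variable {α β R : Type*} [Fintype β] [Zero R]

noncomputable def Matrix.colSupportOn (A : Matrix α β R) (s : Finset α) (i : β) : Finset α :=
  {j ∈ s | A j i ≠ 0}

theorem Matrix.card_heavy_cols_le (A : Matrix α β R) (s : Finset α) {m : ℕ} (hm : 0 < m)
    (hrow : ∀ j, #{i | A j i ≠ 0} ≤ m) :
    #{i | m ≤ #(A.colSupportOn s i)} ≤ #s := by
  refine Nat.le_of_mul_le_mul_right (card_mul_le_card_mul (fun i j => A j i ≠ 0)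
    (fun i hi => (mem_filter.1 hi).2) (fun j _ => ?_)) hm
  exact (card_le_card (filter_subset_filter _ (subset_univ _))).trans (hrow j)

end Counting

section Reversal

variable {Ω : Type*} {m : ℕ} {A : Matrix Ω Ω ℝ} {p q : Ω → ℝ}

/-- Columns `j` with `p j = 0`, where `A j i * q i / p j` is meaningless, become unit vectors
`e_{σ j}`; normalising row `j` of `A` instead would fail when that row vanishes. -/
noncomputable def reverseMatrix (A : Matrix Ω Ω ℝ) (p q : Ω → ℝ) (σ : Ω → Ω) :
    Matrix Ω Ω ℝ :=
  fun i j => if p j = 0 then (if i = σ j then 1 else 0) else A j i * q i / p j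

variable {σ : Ω → Ω}

theorem reverseMatrix_nonneg (hp : ∀ w, 0 ≤ p w) (hq : ∀ w, 0 ≤ q w)
    (hA : ∀ i j, 0 ≤ A i j) (i j : Ω) : 0 ≤ reverseMatrix A p q σ i j := by
  unfold reverseMatrix
  split_ifs
  · exact zero_le_one
  · exact le_rfl
  · exact div_nonneg (mul_nonneg (hA j i) (hq i)) (hp j)

variable [Fintype Ω]

theorem exists_injOn_colSupportOn_lt (hm : 0 < m) (hrow : ∀ j, #{i | A j i ≠ 0} ≤ m) :
    ∃ σ : Ω → Ω, (∀ j, p j = 0 → #(A.colSupportOn {j | p j ≠ 0} (σ j)) < m) ∧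
      Set.InjOn σ {j | p j = 0} := by
  rcases isEmpty_or_nonempty Ω with hΩ | hΩ
  · exact ⟨id, fun j => isEmptyElim j, fun j => isEmptyElim j⟩
  have hcard : #{j | p j = 0} ≤ #{i | #(A.colSupportOn {j | p j ≠ 0} i) < m} := by
    have h1 := card_filter_add_card_filter_not (s := univ) (fun j => p j = 0)
    have h2 := card_filter_add_card_filter_not (s := univ)
      (fun i => #(A.colSupportOn {j | p j ≠ 0} i) < m)
    have h3 := A.card_heavy_cols_le {j | p j ≠ 0} hm hrow
    simp only [ne_eq, not_lt] at h1 h2 h3 ⊢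
    omega
  obtain ⟨σ, hmaps, hinj⟩ := Set.Finite.exists_injOn_of_encard_le (Set.toFinite {j | p j = 0})
    (t := {i | #(A.colSupportOn {j | p j ≠ 0} i) < m})
    (by rw [Set.encard_eq_coe_toFinset_card, Set.encard_eq_coe_toFinset_card]
        simpa [Set.toFinset_ofPred] using hcard)
  exact ⟨σ, fun j hj => hmaps hj, hinj⟩

theorem sum_reverseMatrix_col (hmul : A.mulVec q = p) (j : Ω) :
    ∑ i, reverseMatrix A p q σ i j = 1 := by
  by_cases hpj : p j = 0
  · simp [reverseMatrix, hpj]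
  · simp only [reverseMatrix, hpj, if_false]
    have hj : ∑ i, A j i * q i = p j := congrFun hmul j
    rw [← Finset.sum_div, hj, div_self hpj]

theorem mul_eq_zero_of_mulVec_eq_zero (hq : ∀ w, 0 ≤ q w) (hA : ∀ i j, 0 ≤ A i j)
    {j : Ω} (hj : (A.mulVec q) j = 0) (i : Ω) : A j i * q i = 0 :=
  (Finset.sum_eq_zero_iff_of_nonneg (fun k _ => mul_nonneg (hA j k) (hq k))).1 hj i
    (mem_univ i)

theorem reverseMatrix_mulVec (hq : ∀ w, 0 ≤ q w) (hA : ∀ i j, 0 ≤ A i j)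
    (hcol : ∀ j, ∑ i, A i j = 1) (hmul : A.mulVec q = p) :
    (reverseMatrix A p q σ).mulVec p = q := by
  funext i
  have hterm : ∀ j, reverseMatrix A p q σ i j * p j = A j i * q i := by
    intro j
    by_cases hpj : p j = 0
    · rw [hpj, mul_zero, mul_eq_zero_of_mulVec_eq_zero hq hA (hmul ▸ hpj)]
    · simp only [reverseMatrix, hpj, if_false]
      exact div_mul_cancel₀ _ hpj
  simp only [Matrix.mulVec, dotProduct, hterm, ← Finset.sum_mul, hcol, one_mul]

theorem card_col_support_reverseMatrix_le (hm : 0 < m)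
    (hrow : ∀ j, #{i | A j i ≠ 0} ≤ m) (j : Ω) :
    #{i | reverseMatrix A p q σ i j ≠ 0} ≤ m := by
  by_cases hpj : p j = 0
  · calc #{i | reverseMatrix A p q σ i j ≠ 0} ≤ #{σ j} := by
          refine card_le_card fun i hi => ?_
          by_contra hne
          simp_all [reverseMatrix]
      _ ≤ m := by rw [card_singleton]; exact hm
  · refine (card_le_card fun i hi => ?_).trans (hrow j)
    simp_all [reverseMatrix]

theorem card_row_support_reverseMatrix_le (hcolc : ∀ i, #{j | A j i ≠ 0} ≤ m)
    (hσ : ∀ j, p j = 0 → #(A.colSupportOn {j | p j ≠ 0} (σ j)) < m)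
    (hinj : Set.InjOn σ {j | p j = 0}) (i : Ω) :
    #{j | reverseMatrix A p q σ i j ≠ 0} ≤ m := by
  have hsub : ({j | reverseMatrix A p q σ i j ≠ 0} : Finset Ω) ⊆
      A.colSupportOn {j | p j ≠ 0} i ∪ ({j | p j = 0 ∧ σ j = i} : Finset Ω) := by
    intro j hj
    by_cases hpj : p j = 0 <;> simp_all [reverseMatrix, Matrix.colSupportOn, eq_comm]
  refine (card_le_card hsub).trans ((card_union_le _ _).trans ?_)
  rcases ({j | p j = 0 ∧ σ j = i} : Finset Ω).eq_empty_or_nonempty with hempty | ⟨j₀, hj₀⟩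
  · rw [hempty, card_empty, add_zero]
    exact (card_le_card (filter_subset_filter _ (subset_univ _))).trans (hcolc i)
  · obtain ⟨hpj₀, rfl⟩ := (mem_filter.1 hj₀).2
    have hfiber : #({j | p j = 0 ∧ σ j = σ j₀} : Finset Ω) ≤ 1 :=
      card_le_one.2 fun a ha b hb => by
        simp only [mem_filter] at ha hb
        exact hinj ha.2.1 hb.2.1 (ha.2.2.trans hb.2.2.symm)
    have := hσ j₀ hpj₀
    omega

theorem DispWitness.exists_reverse (hm : 0 < m) (hp : ∀ w, 0 ≤ p w) (hq : ∀ w, 0 ≤ q w)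
    (hA : DispWitness m A q p) : ∃ B, DispWitness m B p q := by
  obtain ⟨hnonneg, hcol, hmul, hrow, hcolc⟩ := hA
  obtain ⟨σ, hσ, hinj⟩ := exists_injOn_colSupportOn_lt (p := p) hm hrow
  exact ⟨reverseMatrix A p q σ, reverseMatrix_nonneg hp hq hnonneg, sum_reverseMatrix_col hmul,
    reverseMatrix_mulVec hq hnonneg hcol hmul, card_row_support_reverseMatrix_le hcolc hσ hinj,
    card_col_support_reverseMatrix_le hm hrow⟩

theorem logDisp_comm (hp : ∀ w, 0 ≤ p w) (hq : ∀ w, 0 ≤ q w) : logDisp p q = logDisp q p := by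
  have hsymm : {m : ℕ | 0 < m ∧ ∃ A, DispWitness m A p q} =
      {m : ℕ | 0 < m ∧ ∃ A, DispWitness m A q p} := by
    ext m
    exact ⟨fun ⟨hm, _, hA⟩ => ⟨hm, hA.exists_reverse hm hq hp⟩,
      fun ⟨hm, _, hA⟩ => ⟨hm, hA.exists_reverse hm hp hq⟩⟩
  rw [logDisp, logDisp, hsymm]

end Reversal

theorem logDisp_symm_general (n : ℕ) (p q : Fin n → ℝ)
    (hp : IsProbVec p) (hq : IsProbVec q) :
    logDisp p q ≤ logDisp q p ∧ logDisp p q = logDisp q p := by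
  have h := logDisp_comm hp.1 hq.1
  exact ⟨h.le, h⟩

theorem logDisp_symm (n : ℕ) (hn : 0 < n) (p q : Fin n → ℝ)
    (hp : IsProbVec p) (hq : IsProbVec q) :
    logDisp p q ≤ logDisp q p ∧ logDisp p q = logDisp q p :=
  logDisp_symm_general n p q hp hq
end

section
/- The logarithmic dispersion satisfies the triangle inequality: for all probability measures π, μ, ν on {1,...,n}, δ(π,ν) ≤ δ(π,μ) + δ(μ,ν). -/
open scoped BigOperators
open Classical Filter

/-! Composing witnesses multiplies the support bounds: if `A₁` maps `p` to `q` and `A₂` maps `q`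
to `r`, then `A₂ * A₁` is column-stochastic, maps `p` to `r`, and each nonzero entry of the
product comes from a path `j → k → i` through nonzero entries, so rows and columns of `A₂ * A₁`
have at most `m₁ * m₂` nonzero entries. Hence the least bound for `(p, r)` is at most the product
of the least bounds, and `logb 2` turns the product into a sum. -/

namespace Matrix

variable {l m n R : Type*} [Fintype m] [NonUnitalNonAssocSemiring R]
  {A : Matrix l m R} {B : Matrix m n R}

theorem exists_ne_zero_of_mul_apply_ne_zero {i : l} {j : n} (h : (A * B) i j ≠ 0) :
    ∃ k, A i k ≠ 0 ∧ B k j ≠ 0 := by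
  obtain ⟨k, -, hk⟩ := Finset.exists_ne_zero_of_sum_ne_zero h
  exact ⟨k, left_ne_zero_of_mul hk, right_ne_zero_of_mul hk⟩

theorem card_filter_mul_row_ne_zero_le [Fintype n] [DecidableEq R] {a b : ℕ}
    (hA : ∀ i, (Finset.univ.filter fun k => A i k ≠ 0).card ≤ a)
    (hB : ∀ k, (Finset.univ.filter fun j => B k j ≠ 0).card ≤ b) (i : l) :
    (Finset.univ.filter fun j => (A * B) i j ≠ 0).card ≤ a * b := by
  have hsub : (Finset.univ.filter fun j => (A * B) i j ≠ 0) ⊆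
      (Finset.univ.filter fun k => A i k ≠ 0).biUnion
        fun k => Finset.univ.filter fun j => B k j ≠ 0 := by
    intro j hj
    obtain ⟨k, hik, hkj⟩ := exists_ne_zero_of_mul_apply_ne_zero (Finset.mem_filter.1 hj).2
    simp only [Finset.mem_biUnion, Finset.mem_filter, Finset.mem_univ, true_and]
    exact ⟨k, hik, hkj⟩
  calc _ ≤ _ := Finset.card_le_card hsub
    _ ≤ _ := Finset.card_biUnion_le_card_mul _ _ b fun k _ => hB k
    _ ≤ a * b := Nat.mul_le_mul_right b (hA i)

theorem card_filter_mul_col_ne_zero_le [Fintype l] [DecidableEq R] {a b : ℕ}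
    (hA : ∀ k, (Finset.univ.filter fun i => A i k ≠ 0).card ≤ a)
    (hB : ∀ j, (Finset.univ.filter fun k => B k j ≠ 0).card ≤ b) (j : n) :
    (Finset.univ.filter fun i => (A * B) i j ≠ 0).card ≤ a * b := by
  have hsub : (Finset.univ.filter fun i => (A * B) i j ≠ 0) ⊆
      (Finset.univ.filter fun k => B k j ≠ 0).biUnion
        fun k => Finset.univ.filter fun i => A i k ≠ 0 := by
    intro i hi
    obtain ⟨k, hik, hkj⟩ := exists_ne_zero_of_mul_apply_ne_zero (Finset.mem_filter.1 hi).2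
    simp only [Finset.mem_biUnion, Finset.mem_filter, Finset.mem_univ, true_and]
    exact ⟨k, hkj, hik⟩
  calc _ ≤ _ := Finset.card_le_card hsub
    _ ≤ _ := Finset.card_biUnion_le_card_mul _ _ a fun k _ => hA k
    _ ≤ b * a := Nat.mul_le_mul_right a (hB j)
    _ = a * b := Nat.mul_comm b a

end Matrix

section DispWitness

variable {Ω : Type*} [Fintype Ω]

theorem DispWitness.mul {m₁ m₂ : ℕ} {A₁ A₂ : Matrix Ω Ω ℝ} {p q r : Ω → ℝ}
    (h₁ : DispWitness m₁ A₁ p q) (h₂ : DispWitness m₂ A₂ q r) :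
    DispWitness (m₁ * m₂) (A₂ * A₁) p r := by
  obtain ⟨hA₁_nonneg, hA₁_sum, hA₁_map, hA₁_row, hA₁_col⟩ := h₁
  obtain ⟨hA₂_nonneg, hA₂_sum, hA₂_map, hA₂_row, hA₂_col⟩ := h₂
  refine ⟨fun i j => Finset.sum_nonneg fun k _ => mul_nonneg (hA₂_nonneg i k) (hA₁_nonneg k j),
    fun j => ?_, by rw [← Matrix.mulVec_mulVec, hA₁_map, hA₂_map], ?_, ?_⟩
  · calc ∑ i, (A₂ * A₁) i j = ∑ k, (∑ i, A₂ i k) * A₁ k j := by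
          simp only [Matrix.mul_apply, Finset.sum_mul]
          exact Finset.sum_comm
      _ = 1 := by simp only [hA₂_sum, one_mul, hA₁_sum]
  · exact mul_comm m₂ m₁ ▸ Matrix.card_filter_mul_row_ne_zero_le hA₂_row hA₁_row
  · exact mul_comm m₂ m₁ ▸ Matrix.card_filter_mul_col_ne_zero_le hA₂_col hA₁_col

theorem dispWitness_card {p q : Ω → ℝ} (hp : ∑ w, p w = 1) (hq : IsProbVec q) :
    DispWitness (Fintype.card Ω) (Matrix.of fun i _ => q i) p q := by
  refine ⟨fun i _ => hq.1 i, fun _ => hq.2, ?_, fun _ => Finset.card_le_univ _,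
    fun _ => Finset.card_le_univ _⟩
  funext i
  simp only [Matrix.mulVec, dotProduct, Matrix.of_apply, ← Finset.mul_sum, hp, mul_one]

theorem exists_dispWitness_logDisp_eq {p q : Ω → ℝ} (hp : ∑ w, p w = 1) (hq : IsProbVec q) :
    ∃ m A, 0 < m ∧ DispWitness m A p q ∧ logDisp p q = Real.logb 2 m := by
  have hΩ : 0 < Fintype.card Ω := Fintype.card_pos_iff.2 <| by
    by_contra h
    simp [not_nonempty_iff.1 h] at hp
  obtain ⟨hm, A, hA⟩ :=
    Nat.sInf_mem (s := {m : ℕ | 0 < m ∧ ∃ A, DispWitness m A p q})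
      ⟨_, hΩ, _, dispWitness_card hp hq⟩
  exact ⟨_, A, hm, hA, rfl⟩

theorem logDisp_le_logb {m : ℕ} {A : Matrix Ω Ω ℝ} {p q : Ω → ℝ} (hm : 0 < m)
    (hA : DispWitness m A p q) : logDisp p q ≤ Real.logb 2 m := by
  obtain ⟨hpos, -⟩ :=
    Nat.sInf_mem (s := {m : ℕ | 0 < m ∧ ∃ A, DispWitness m A p q}) ⟨m, hm, A, hA⟩
  exact Real.logb_le_logb_of_le one_lt_two (Nat.cast_pos.2 hpos)
    (Nat.cast_le.2 (Nat.sInf_le ⟨hm, A, hA⟩))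

end DispWitness

theorem logDisp_triangle_general (n : ℕ) (p q r : Fin n → ℝ)
    (hp : IsProbVec p) (hq : IsProbVec q) (hr : IsProbVec r) :
    logDisp p r ≤ logDisp p q + logDisp q r := by
  obtain ⟨m₁, A₁, hm₁, hA₁, hpq⟩ := exists_dispWitness_logDisp_eq hp.2 hq
  obtain ⟨m₂, A₂, hm₂, hA₂, hqr⟩ := exists_dispWitness_logDisp_eq hq.2 hr
  calc logDisp p r ≤ Real.logb 2 (m₁ * m₂ : ℕ) :=
        logDisp_le_logb (Nat.mul_pos hm₁ hm₂) (hA₁.mul hA₂)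
    _ = logDisp p q + logDisp q r := by
      rw [hpq, hqr, Nat.cast_mul, Real.logb_mul (by positivity) (by positivity)]

theorem logDisp_triangle (n : ℕ) (hn : 0 < n) (p q r : Fin n → ℝ)
    (hp : IsProbVec p) (hq : IsProbVec q) (hr : IsProbVec r) :
    logDisp p r ≤ logDisp p q + logDisp q r :=
  logDisp_triangle_general n p q r hp hq hr
end

section
/- Let p ∈ Δₙ be a nonincreasing probability vector and m ≤ n a positive integer. Define r ∈ ℝ^{⌈n/m⌉} by grouping: rᵢ = p_{(i−1)m+1} + ... + p_{min(im,n)}. Then r is a nonincreasing probability vector, and H(p) ≤ H(r) + log m, where H is Shannon entropy. -/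
open scoped BigOperators
open Classical Filter

/-!
Within a block of at most `m` masses with total `rᵢ`, Jensen's inequality for the concave
`x ↦ -x log x` gives `Σ -pⱼ log pⱼ ≤ -rᵢ log rᵢ + rᵢ log m`; summing over the blocks yields
`H(p) ≤ H(r) + log m`. The block sums are nonincreasing because, after padding `p` by zeros
(which keeps it nonincreasing, as `p ≥ 0`), the `i'`-th block is dominated termwise by the
`i`-th one for `i ≤ i'`.
-/

open Finset Real

theorem shannonEntropy_eq_sum_negMulLog_div {Ω : Type*} [Fintype Ω] (p : Ω → ℝ) :
    shannonEntropy p = (∑ w, negMulLog (p w)) / log 2 := by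
  rw [shannonEntropy, sum_div]
  refine sum_congr rfl fun w _ => ?_
  split_ifs with h
  · simp [h]
  · rw [negMulLog, logb, log_inv]; ring

-- Jensen for the concave `negMulLog` with uniform weights `1 / #s`.
theorem sum_negMulLog_le_of_card_le {ι : Type*} {s : Finset ι} {q : ι → ℝ}
    (hq : ∀ i ∈ s, 0 ≤ q i) {m : ℕ} (hs : #s ≤ m) :
    ∑ i ∈ s, negMulLog (q i) ≤ negMulLog (∑ i ∈ s, q i) + (∑ i ∈ s, q i) * log m := by
  rcases s.eq_empty_or_nonempty with rfl | hne
  · simp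
  have hk : (0 : ℝ) < #s := by exact_mod_cast hne.card_pos
  have jensen := concaveOn_negMulLog.le_map_sum (t := s) (w := fun _ => (#s : ℝ)⁻¹) (p := q)
    (fun _ _ => by positivity) (by simp [hk.ne']) hq
  have hinv : negMulLog (#s : ℝ)⁻¹ = (#s : ℝ)⁻¹ * log #s := by simp [negMulLog, log_inv]
  simp only [smul_eq_mul, ← mul_sum, negMulLog_mul, hinv] at jensen
  have hlog : log #s ≤ log m := log_le_log hk (by exact_mod_cast hs)
  have hsum : 0 ≤ ∑ i ∈ s, q i := sum_nonneg hq
  calc ∑ i ∈ s, negMulLog (q i)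
      ≤ negMulLog (∑ i ∈ s, q i) + (∑ i ∈ s, q i) * log #s :=
        (mul_le_mul_iff_of_pos_left (inv_pos.2 hk)).1 (jensen.trans_eq (by ring))
    _ ≤ negMulLog (∑ i ∈ s, q i) + (∑ i ∈ s, q i) * log m := by gcongr

theorem shannonEntropy_le_shannonEntropy_fiberwise_add {α β : Type*} [Fintype α] [Fintype β]
    [DecidableEq β] (f : α → β) {p : α → ℝ} (hp : ∀ a, 0 ≤ p a) {m : ℕ}
    (hf : ∀ b, #{a | f a = b} ≤ m) :
    shannonEntropy p ≤
      shannonEntropy (fun b => ∑ a with f a = b, p a) + (∑ a, p a) * logb 2 m := by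
  have hlog2 : 0 < log 2 := log_pos one_lt_two
  rw [shannonEntropy_eq_sum_negMulLog_div, shannonEntropy_eq_sum_negMulLog_div, logb,
    ← sum_fiberwise univ f p, ← sum_fiberwise univ f, mul_div_assoc', ← add_div,
    div_le_div_iff_of_pos_right hlog2, sum_mul, ← sum_add_distrib]
  exact sum_le_sum fun b _ => sum_negMulLog_le_of_card_le (fun a _ => hp a) (hf b)

def finBlock (n m i : ℕ) : Finset (Fin n) :=
  {j | i * m ≤ (j : ℕ) ∧ (j : ℕ) < (i + 1) * m}

theorem mem_finBlock_iff_div_eq {n m i : ℕ} (hm : 0 < m) {j : Fin n} :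
    j ∈ finBlock n m i ↔ (j : ℕ) / m = i := by
  rw [finBlock, mem_filter, ← Nat.le_div_iff_mul_le hm, ← Nat.div_lt_iff_lt_mul hm]
  simp only [mem_univ, true_and]
  omega

theorem map_valEmbedding_finBlock (n m i : ℕ) :
    (finBlock n m i).map Fin.valEmbedding = {k ∈ Ico (i * m) ((i + 1) * m) | k < n} := by
  ext k
  simp only [finBlock, Finset.mem_map, mem_filter, mem_univ, true_and, mem_Ico,
    Fin.valEmbedding_apply]
  exact ⟨fun ⟨j, hj, hjk⟩ => hjk ▸ ⟨hj, j.isLt⟩, fun ⟨hk, hkn⟩ => ⟨⟨k, hkn⟩, hk, rfl⟩⟩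

theorem card_finBlock_le (n m i : ℕ) : #(finBlock n m i) ≤ m := by
  rw [← card_map Fin.valEmbedding, map_valEmbedding_finBlock]
  refine (card_filter_le _ _).trans ?_
  rw [Nat.card_Ico, add_mul, one_mul, Nat.add_sub_cancel_left]

def zeroExtend {n : ℕ} (p : Fin n → ℝ) (k : ℕ) : ℝ :=
  if h : k < n then p ⟨k, h⟩ else 0

theorem Antitone.zeroExtend {n : ℕ} {p : Fin n → ℝ} (hp : Antitone p) (hp0 : ∀ j, 0 ≤ p j) :
    Antitone (zeroExtend p) := by
  intro k l hkl
  unfold _root_.zeroExtend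
  split_ifs with hl hk hk
  · exact hp (Fin.mk_le_mk.2 hkl)
  · omega
  · exact hp0 _
  · rfl

theorem sum_finBlock_eq_sum_range {n : ℕ} (p : Fin n → ℝ) (m i : ℕ) :
    ∑ j ∈ finBlock n m i, p j = ∑ t ∈ range m, zeroExtend p (i * m + t) := by
  have hmap : ∑ j ∈ finBlock n m i, p j =
      ∑ k ∈ (finBlock n m i).map Fin.valEmbedding, zeroExtend p k := by
    rw [sum_map]
    exact sum_congr rfl fun j _ => by simp [zeroExtend]
  rw [hmap, map_valEmbedding_finBlock, sum_filter_of_ne fun k _ hk => ?_, sum_Ico_eq_sum_range,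
    add_mul, one_mul, Nat.add_sub_cancel_left]
  by_contra hkn
  exact hk (dif_neg hkn)

theorem antitone_sum_finBlock {n m : ℕ} {p : Fin n → ℝ} (hp : Antitone p) (hp0 : ∀ j, 0 ≤ p j) :
    Antitone fun i => ∑ j ∈ finBlock n m i, p j := by
  intro i i' hii'
  simp only [sum_finBlock_eq_sum_range]
  exact sum_le_sum fun t _ => hp.zeroExtend hp0 (by gcongr)

theorem div_lt_add_sub_one_div {j n m : ℕ} (hm : 0 < m) (hj : j < n) :
    j / m < (n + m - 1) / m := by
  rw [Nat.lt_iff_add_one_le, Nat.le_div_iff_mul_le hm, add_mul, one_mul]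
  have := Nat.div_mul_le_self j m
  omega

-- `(n + m - 1) / m = ⌈n / m⌉` is the number of blocks.
def finBlockIndex {n m : ℕ} (hm : 0 < m) (j : Fin n) : Fin ((n + m - 1) / m) :=
  ⟨j / m, div_lt_add_sub_one_div hm j.isLt⟩

theorem filter_finBlockIndex_eq {n m : ℕ} (hm : 0 < m) (i : Fin ((n + m - 1) / m)) :
    univ.filter (fun j => finBlockIndex hm j = i) = finBlock n m i := by
  ext j
  rw [mem_finBlock_iff_div_eq hm, mem_filter, Fin.ext_iff]
  simp [finBlockIndex]

theorem entropy_grouping_general (n m : ℕ) (hm : 0 < m)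
    (p : Fin n → ℝ) (hp : IsProbVec p) (hpm : Antitone p)
    (r : Fin ((n + m - 1) / m) → ℝ)
    (hr : ∀ i, r i = ∑ j ∈ Finset.univ.filter
      (fun j : Fin n => (i : ℕ) * m ≤ (j : ℕ) ∧ (j : ℕ) < ((i : ℕ) + 1) * m), p j) :
    IsProbVec r ∧ Antitone r ∧
    shannonEntropy p ≤ shannonEntropy r + Real.logb 2 m := by
  have hr_block (i) : r i = ∑ j ∈ finBlock n m i, p j := hr i
  have hr_fiber : r = fun i => ∑ j with finBlockIndex hm j = i, p j := by
    funext i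
    rw [hr_block, ← filter_finBlockIndex_eq hm]
  refine ⟨⟨fun i => ?_, ?_⟩, fun i i' hii' => ?_, ?_⟩
  · rw [hr_block]
    exact sum_nonneg fun j _ => hp.1 j
  · rw [hr_fiber, sum_fiberwise, hp.2]
  · rw [hr_block, hr_block]
    exact antitone_sum_finBlock hpm hp.1 hii'
  · have key := shannonEntropy_le_shannonEntropy_fiberwise_add (finBlockIndex hm) hp.1
      fun i => by rw [filter_finBlockIndex_eq]; exact card_finBlock_le n m i
    rwa [hp.2, one_mul, ← hr_fiber] at key

theorem entropy_grouping (n m : ℕ) (hm : 0 < m) (hmn : m ≤ n)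
    (p : Fin n → ℝ) (hp : IsProbVec p) (hpm : Antitone p)
    (r : Fin ((n + m - 1) / m) → ℝ)
    (hr : ∀ i, r i = ∑ j ∈ Finset.univ.filter
      (fun j : Fin n => (i : ℕ) * m ≤ (j : ℕ) ∧ (j : ℕ) < ((i : ℕ) + 1) * m), p j) :
    IsProbVec r ∧ Antitone r ∧
    shannonEntropy p ≤ shannonEntropy r + Real.logb 2 m :=
  entropy_grouping_general n m hm p hp hpm r hr
end

section
/- Let A be an n×n nonnegative column-stochastic matrix with at most m nonzero entries in each row and column, let p, q ∈ Δₙ be nonincreasing probability vectors with Ap = q, and let r = Bp where B is the n×n 0-1 block matrix with b_{ij} = 1 iff (i−1)m < j ≤ min(im, n). Then the vector r majorizes q. -/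
open scoped BigOperators
open Classical Filter

/-! Summing `A p` over its first `t` coordinates only involves the columns in the union of the
supports of the first `t` rows, at most `t m` of them, and each column contributes at most its
own mass since the columns of `A` sum to `1`. As `p` is nonincreasing, its sum over any `k`
indices is at most the sum of its first `k` entries, so `∑_{i<t} (A p)_i ≤ ∑_{j<tm} p_j`, and the
right side is `∑_{i<t} (B p)_i`. Both `A` and `B` are column stochastic, so `A p` and `B p` have
the same total mass as `p`. -/

open Finset Matrix

theorem Antitone.sum_le_sum_filter_val_lt_card {R : Type*} [AddCommMonoid R] [PartialOrder R]
    [IsOrderedAddMonoid R] {n : ℕ} {x : Fin n → R} (hx : Antitone x) (S : Finset (Fin n)) :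
    ∑ j ∈ S, x j ≤ ∑ j with j.val < #S, x j := by
  induction S using Finset.induction_on_max with
  | empty => simp
  | insert a S hlt ih =>
    have haS : a ∉ S := fun h => lt_irrefl a (hlt a h)
    have hcard : #S ≤ a := by
      simpa using card_le_card (show S ⊆ Iio a from fun y hy => mem_Iio.2 (hlt y hy))
    set k : Fin n := ⟨#S, hcard.trans_lt a.2⟩
    have hsplit : univ.filter (fun j : Fin n => j.val < #S + 1) =
        insert k (univ.filter fun j : Fin n => j.val < #S) := by
      ext j; simp [k, Fin.ext_iff]; omega
    rw [sum_insert haS, card_insert_of_notMem haS, hsplit, sum_insert (by simp [k])]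
    exact add_le_add (hx (Fin.le_def.2 hcard)) ih

section ColStochastic

variable {ι R : Type*} [Fintype ι] [DecidableEq ι] [Semiring R] [PartialOrder R] [IsOrderedRing R]
  [DecidableEq R] {A : Matrix ι ι R} {x : ι → R}

theorem Matrix.sum_mulVec_le_sum_biUnion_support (hA : A ∈ colStochastic R ι) (hx : 0 ≤ x)
    (F : Finset ι) :
    ∑ i ∈ F, (A *ᵥ x) i ≤ ∑ j ∈ F.biUnion (fun i => {j | A i j ≠ 0}), x j := by
  set S := F.biUnion (fun i => {j | A i j ≠ 0})
  have hcol_le : ∀ j, ∑ i ∈ F, A i j ≤ 1 := fun j =>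
    (sum_le_sum_of_subset_of_nonneg (subset_univ F) fun i _ _ => hA.1 i j).trans_eq
      (sum_col_of_mem_colStochastic hA j)
  have hcol_zero : ∀ j ∉ S, ∑ i ∈ F, A i j = 0 := fun j hj =>
    sum_eq_zero fun i hi => by_contra fun h => hj (mem_biUnion.2 ⟨i, hi, by simpa using h⟩)
  calc ∑ i ∈ F, (A *ᵥ x) i = ∑ j, (∑ i ∈ F, A i j) * x j := by
        simp only [mulVec, dotProduct, sum_mul]; exact sum_comm
    _ = ∑ j ∈ S, (∑ i ∈ F, A i j) * x j :=
        (sum_subset (subset_univ S) fun j _ hj => by rw [hcol_zero j hj, zero_mul]).symm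
    _ ≤ ∑ j ∈ S, x j := sum_le_sum fun j _ => mul_le_of_le_one_left (hx j) (hcol_le j)

end ColStochastic

theorem Matrix.sum_mulVec_le_sum_filter_val_lt {R : Type*} [Semiring R] [PartialOrder R]
    [IsOrderedRing R] [DecidableEq R] {n m : ℕ} {A : Matrix (Fin n) (Fin n) R} {x : Fin n → R}
    (hA : A ∈ colStochastic R (Fin n)) (hAr : ∀ i, #{j | A i j ≠ 0} ≤ m)
    (hx₀ : 0 ≤ x) (hx : Antitone x) (F : Finset (Fin n)) :
    ∑ i ∈ F, (A *ᵥ x) i ≤ ∑ j with j.val < #F * m, x j := by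
  set S := F.biUnion (fun i => {j | A i j ≠ 0})
  have hS : #S ≤ #F * m := card_biUnion_le_card_mul _ _ _ fun i _ => hAr i
  calc ∑ i ∈ F, (A *ᵥ x) i ≤ ∑ j ∈ S, x j := sum_mulVec_le_sum_biUnion_support hA hx₀ F
    _ ≤ ∑ j with j.val < #S, x j := hx.sum_le_sum_filter_val_lt_card S
    _ ≤ ∑ j with j.val < #F * m, x j :=
        sum_le_sum_of_subset_of_nonneg (fun j => by simp only [mem_filter_univ]; omega)
          fun j _ _ => hx₀ j

def blockMatrix (R : Type*) [Zero R] [One R] (n m : ℕ) : Matrix (Fin n) (Fin n) R :=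
  Matrix.of fun i j => if (i : ℕ) * m ≤ (j : ℕ) ∧ (j : ℕ) < ((i : ℕ) + 1) * m then 1 else 0

section blockMatrix

variable {R : Type*} [NonAssocSemiring R] {n m : ℕ}

theorem blockMatrix_apply (hm : 0 < m) (i j : Fin n) :
    blockMatrix R n m i j = if (j : ℕ) / m = i then 1 else 0 := by
  simp only [blockMatrix, of_apply, Nat.div_eq_iff hm, add_mul, one_mul]
  exact if_congr (by omega) rfl rfl

theorem sum_filter_val_lt_blockMatrix_mulVec (hm : 0 < m) (x : Fin n → R) (t : ℕ) :
    ∑ i with i.val < t, (blockMatrix R n m *ᵥ x) i = ∑ j with j.val < t * m, x j := by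
  have hcol (j : Fin n) :
      ∑ i with i.val < t, blockMatrix R n m i j = if j.val < t * m then 1 else 0 := by
    set k : Fin n := ⟨j / m, (Nat.div_le_self _ _).trans_lt j.2⟩
    have hk (i : Fin n) : (j : ℕ) / m = i ↔ k = i := (Fin.ext_iff (a := k)).symm
    simp_rw [blockMatrix_apply hm, hk, sum_ite_eq, mem_filter_univ, k, Nat.div_lt_iff_lt_mul hm]
  simp only [mulVec, dotProduct]
  rw [sum_comm, sum_filter]
  simp_rw [← sum_mul, hcol, ite_mul, one_mul, zero_mul]

theorem sum_blockMatrix_mulVec (hm : 0 < m) (x : Fin n → R) :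
    ∑ i, (blockMatrix R n m *ᵥ x) i = ∑ j, x j := by
  have := sum_filter_val_lt_blockMatrix_mulVec hm x n
  rwa [filter_true_of_mem fun i _ => i.2, filter_true_of_mem fun j _ => ?_] at this
  exact j.2.trans_le (Nat.le_mul_of_pos_right n hm)

end blockMatrix

theorem block_matrix_majorizes_general (n m : ℕ) (hm : 0 < m)
    (A : Matrix (Fin n) (Fin n) ℝ)
    (hA0 : ∀ i j, 0 ≤ A i j) (hA1 : ∀ j, ∑ i, A i j = 1)
    (hAr : ∀ i, (Finset.univ.filter fun j => A i j ≠ 0).card ≤ m)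
    (p q : Fin n → ℝ) (hp : IsProbVec p)
    (hpm : Antitone p)
    (hpq : A.mulVec p = q)
    (B : Matrix (Fin n) (Fin n) ℝ)
    (hB : ∀ i j, B i j = if (i : ℕ) * m ≤ (j : ℕ) ∧ (j : ℕ) < ((i : ℕ) + 1) * m then 1 else 0)
    (r : Fin n → ℝ) (hrdef : r = B.mulVec p) :
    (∑ i, r i = ∑ i, q i) ∧
    (∀ t : ℕ, t ≤ n →
      ∑ i ∈ Finset.univ.filter (fun i : Fin n => (i : ℕ) < t), q i ≤
      ∑ i ∈ Finset.univ.filter (fun i : Fin n => (i : ℕ) < t), r i) := by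
  have hA : A ∈ colStochastic ℝ (Fin n) := mem_colStochastic_iff_sum.2 ⟨hA0, hA1⟩
  obtain rfl : B = blockMatrix ℝ n m := Matrix.ext hB
  subst hrdef hpq
  refine ⟨by rw [sum_blockMatrix_mulVec hm, sum_mulVec_of_mem_colStochastic hA], fun t ht => ?_⟩
  have hcard : #{i : Fin n | i.val < t} = t := by rw [Fin.card_filter_val_lt, min_eq_right ht]
  calc ∑ i with i.val < t, (A *ᵥ p) i ≤ ∑ j with j.val < t * m, p j := by
        simpa only [hcard] using sum_mulVec_le_sum_filter_val_lt hA hAr hp.1 hpm {i | i.val < t}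
    _ = ∑ i with i.val < t, (blockMatrix ℝ n m *ᵥ p) i :=
        (sum_filter_val_lt_blockMatrix_mulVec hm p t).symm

theorem block_matrix_majorizes (n m : ℕ) (hm : 0 < m)
    (A : Matrix (Fin n) (Fin n) ℝ)
    (hA0 : ∀ i j, 0 ≤ A i j) (hA1 : ∀ j, ∑ i, A i j = 1)
    (hAr : ∀ i, (Finset.univ.filter fun j => A i j ≠ 0).card ≤ m)
    (hAc : ∀ j, (Finset.univ.filter fun i => A i j ≠ 0).card ≤ m)
    (p q : Fin n → ℝ) (hp : IsProbVec p) (hq : IsProbVec q)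
    (hpm : Antitone p) (hqm : Antitone q)
    (hpq : A.mulVec p = q)
    (B : Matrix (Fin n) (Fin n) ℝ)
    (hB : ∀ i j, B i j = if (i : ℕ) * m ≤ (j : ℕ) ∧ (j : ℕ) < ((i : ℕ) + 1) * m then 1 else 0)
    (r : Fin n → ℝ) (hrdef : r = B.mulVec p) :
    (∑ i, r i = ∑ i, q i) ∧
    (∀ t : ℕ, t ≤ n →
      ∑ i ∈ Finset.univ.filter (fun i : Fin n => (i : ℕ) < t), q i ≤
      ∑ i ∈ Finset.univ.filter (fun i : Fin n => (i : ℕ) < t), r i) :=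
  block_matrix_majorizes_general n m hm A hA0 hA1 hAr p q hp hpm hpq B hB r hrdef
end

section
/- Finite-state dimension is δ⁺-contractive: for all sequences S, T over alphabet Σ = {0,...,k−1}, |dim_FS(S) − dim_FS(T)| ≤ δ⁺(S,T), where δ⁺ is the normalized upper logarithmic block dispersion. -/
open scoped BigOperators
open Classical Filter

noncomputable def deltaPlus (k : ℕ) (S T : ℕ → Fin k) : ℝ :=
  Filter.limsup (fun l : ℕ =>
    (1 / ((l : ℝ) * Real.logb 2 k)) *
      Filter.limsup (fun n => logDisp (blockFreq k l S n) (blockFreq k l T n)) Filter.atTop)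
    Filter.atTop

/-!
If a column-stochastic `A` with at most `m` nonzero entries per row and column maps `p` to `q`,
the coupling `A i j * p j` has marginals `q` and `p` and every fibre of either marginal carries at
most `m` atoms, so the entropies of `p` and `q` differ by at most `log m`. Hence, at each block
length, the lower block entropies of `S` and `T` differ by at most the `limsup` of the dispersions.

Since `dimFS` is an infimum over all block lengths while `deltaPlus` only controls long blocks, we
also need that the normalised block entropy does not increase from `l` to `m * l`. An `m * l`-block
is an `m`-tuple of `l`-blocks; its entropy is at most the sum of the entropies of the coordinates
(subadditivity), which is at most `m` times the entropy of their average (concavity), and that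
average is the distribution of the first `n * m` blocks of length `l`. Finally, the `liminf` along
multiples of `m` is the full `liminf`, because appending fewer than `m` blocks to a long sample
changes its empirical entropy by `o(1)`.
-/

open Real Finset Topology

section Entropy

variable {Ω : Type*} [Fintype Ω]

noncomputable def lnEntropy (p : Ω → ℝ) : ℝ := ∑ w, negMulLog (p w)

lemma lnEntropy_nonneg {p : Ω → ℝ} (h0 : ∀ w, 0 ≤ p w) (h1 : ∀ w, p w ≤ 1) :
    0 ≤ lnEntropy p :=
  sum_nonneg fun w _ => negMulLog_nonneg (h0 w) (h1 w)

lemma lnEntropy_comp_equiv {Ω' : Type*} [Fintype Ω'] (p : Ω → ℝ) (e : Ω' ≃ Ω) :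
    lnEntropy (p ∘ e) = lnEntropy p :=
  e.sum_comp (fun w => negMulLog (p w))

lemma negMulLog_sum_le {ι : Type*} (s : Finset ι) {x : ι → ℝ} (hx : ∀ i ∈ s, 0 ≤ x i) :
    negMulLog (∑ i ∈ s, x i) ≤ ∑ i ∈ s, negMulLog (x i) := by
  rw [negMulLog, neg_mul, sum_mul, ← sum_neg_distrib]
  refine sum_le_sum fun i hi => ?_
  rcases (hx i hi).eq_or_lt with h | h
  · simp [← h]
  · rw [negMulLog, neg_mul, neg_le_neg_iff]
    exact mul_le_mul_of_nonneg_left (log_le_log h (single_le_sum hx hi)) h.le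

lemma negMulLog_add_le {a b : ℝ} (ha : 0 ≤ a) (hb : 0 ≤ b) :
    negMulLog (a + b) ≤ negMulLog a + negMulLog b := by
  simpa using negMulLog_sum_le (univ : Finset (Fin 2)) (x := ![a, b])
    (by simp [Fin.forall_fin_two, ha, hb])

/-- Jensen's inequality for the concave function `negMulLog`, with uniform weights. -/
lemma sum_negMulLog_le {ι : Type*} (s : Finset ι) {x : ι → ℝ} (hx : ∀ i ∈ s, 0 ≤ x i) :
    ∑ i ∈ s, negMulLog (x i) ≤ negMulLog (∑ i ∈ s, x i) + (∑ i ∈ s, x i) * log #s := by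
  rcases s.eq_empty_or_nonempty with rfl | hs
  · simp
  have hN : (0 : ℝ) < #s := by exact_mod_cast hs.card_pos
  have hjensen := concaveOn_negMulLog.le_map_sum (t := s) (w := fun _ => (#s : ℝ)⁻¹) (p := x)
    (fun _ _ => by positivity) (by simp [hN.ne']) hx
  simp only [smul_eq_mul, ← mul_sum] at hjensen
  rw [mul_comm, negMulLog_mul, negMulLog, log_inv] at hjensen
  calc ∑ i ∈ s, negMulLog (x i) = #s * ((∑ i ∈ s, negMulLog (x i)) * (#s : ℝ)⁻¹) := by
        field_simp
    _ ≤ #s * ((∑ i ∈ s, x i) * (-(#s : ℝ)⁻¹ * -log #s)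
          + (#s : ℝ)⁻¹ * negMulLog (∑ i ∈ s, x i)) := by
        gcongr
    _ = _ := by field_simp; ring

lemma lnEntropy_le_log_card {p : Ω → ℝ} (hp : IsProbVec p) :
    lnEntropy p ≤ log (Fintype.card Ω) := by
  simpa [lnEntropy, hp.2] using sum_negMulLog_le univ fun w _ => hp.1 w

/-- Gibbs' inequality. -/
lemma lnEntropy_le_neg_sum_mul_log {p q : Ω → ℝ} (hp : IsProbVec p) (hq0 : ∀ w, 0 ≤ q w)
    (hq1 : ∑ w, q w ≤ 1) (hpq : ∀ w, p w ≠ 0 → q w ≠ 0) :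
    lnEntropy p ≤ -∑ w, p w * log (q w) := by
  have key : ∀ w, negMulLog (p w) ≤ -(p w * log (q w)) + (q w - p w) := by
    intro w
    rcases (hp.1 w).eq_or_lt with h | h
    · simp [← h, hq0 w]
    have hqw := (hq0 w).lt_of_ne (hpq w h.ne').symm
    have := mul_le_mul_of_nonneg_left (log_le_sub_one_of_pos (div_pos hqw h)) h.le
    rw [log_div hqw.ne' h.ne', mul_sub, mul_sub, mul_div_cancel₀ _ h.ne'] at this
    rw [negMulLog]
    linarith
  calc lnEntropy p ≤ ∑ w, (-(p w * log (q w)) + (q w - p w)) := sum_le_sum fun w _ => key w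
    _ ≤ -∑ w, p w * log (q w) := by
      rw [sum_add_distrib, sum_sub_distrib, sum_neg_distrib, hp.2]
      linarith

lemma lnEntropy_add_le {p q : Ω → ℝ} (hp : ∀ w, 0 ≤ p w) (hq : ∀ w, 0 ≤ q w)
    {a b : ℝ} (ha : 0 ≤ a) (hb : 0 ≤ b) :
    lnEntropy (fun w => a * p w + b * q w) ≤ a * lnEntropy p + b * lnEntropy q
      + (∑ w, p w) * negMulLog a + (∑ w, q w) * negMulLog b := by
  calc lnEntropy (fun w => a * p w + b * q w)
      ≤ ∑ w, (negMulLog (a * p w) + negMulLog (b * q w)) :=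
        sum_le_sum fun w _ => negMulLog_add_le (mul_nonneg ha (hp w)) (mul_nonneg hb (hq w))
    _ = _ := by
      simp only [negMulLog_mul, lnEntropy, sum_add_distrib, ← mul_sum, ← sum_mul]
      ring

end Entropy

section Joint

variable {α β : Type*} [Fintype α] [Fintype β]

lemma lnEntropy_fst_le {P : α × β → ℝ} (hP : ∀ x, 0 ≤ P x) :
    lnEntropy (fun a => ∑ b, P (a, b)) ≤ lnEntropy P := by
  rw [lnEntropy, lnEntropy, Fintype.sum_prod_type]
  exact sum_le_sum fun a _ => negMulLog_sum_le _ fun b _ => hP (a, b)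

lemma sum_negMulLog_le_of_card_support_le {x : β → ℝ} (hx : ∀ b, 0 ≤ x b) {m : ℕ}
    (hm : #{b | x b ≠ 0} ≤ m) :
    ∑ b, negMulLog (x b) ≤ negMulLog (∑ b, x b) + (∑ b, x b) * log m := by
  set s : Finset β := {b | x b ≠ 0}
  have hs_neg : ∑ b, negMulLog (x b) = ∑ b ∈ s, negMulLog (x b) :=
    (sum_filter_of_ne (p := fun b => x b ≠ 0) fun b _ h h0 => h (by rw [h0, negMulLog_zero])).symm
  have hs_sum : ∑ b, x b = ∑ b ∈ s, x b := (sum_filter_ne_zero _).symm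
  rw [hs_neg, hs_sum]
  refine (sum_negMulLog_le s fun b _ => hx b).trans ((add_le_add_iff_left _).2 ?_)
  rcases s.eq_empty_or_nonempty with hs | hs
  · simp [hs]
  exact mul_le_mul_of_nonneg_left
    (log_le_log (by exact_mod_cast hs.card_pos) (by exact_mod_cast hm))
    (sum_nonneg fun b _ => hx b)

lemma lnEntropy_le_lnEntropy_fst_add {P : α × β → ℝ} (hP : ∀ x, 0 ≤ P x) {m : ℕ}
    (hm : ∀ a, #{b | P (a, b) ≠ 0} ≤ m) :
    lnEntropy P ≤ lnEntropy (fun a => ∑ b, P (a, b)) + (∑ x, P x) * log m := by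
  rw [lnEntropy, lnEntropy, Fintype.sum_prod_type, Fintype.sum_prod_type, sum_mul,
    ← sum_add_distrib]
  exact sum_le_sum fun a _ => sum_negMulLog_le_of_card_support_le (fun b => hP (a, b)) (hm a)

end Joint

lemma abs_lnEntropy_sub_le_log {Ω : Type*} [Fintype Ω] {m : ℕ} {A : Matrix Ω Ω ℝ}
    {p q : Ω → ℝ} (hp : IsProbVec p) (hA : DispWitness m A p q) :
    |lnEntropy p - lnEntropy q| ≤ log m := by
  obtain ⟨hA0, hAcol, rfl, hrow, hcol⟩ := hA
  set P : Ω × Ω → ℝ := fun x => A x.1 x.2 * p x.2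
  set P' : Ω × Ω → ℝ := P ∘ Equiv.prodComm Ω Ω
  have hP : ∀ x, 0 ≤ P x := fun x => mul_nonneg (hA0 _ _) (hp.1 _)
  have hP' : ∀ x, 0 ≤ P' x := fun x => hP _
  have hfst : (fun i => ∑ j, P (i, j)) = A.mulVec p := rfl
  have hsnd : (fun j => ∑ i, P' (j, i)) = p := funext fun j => by simp [P', P, ← sum_mul, hAcol]
  have hmass : ∑ x, P x = 1 := by
    rw [Fintype.sum_prod_type_right]; simp [P, ← sum_mul, hAcol, hp.2]
  have hmass' : ∑ x, P' x = 1 := (Equiv.sum_comp _ P).trans hmass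
  have hent : lnEntropy P' = lnEntropy P := lnEntropy_comp_equiv P _
  have hrow' : ∀ i, #{j | P (i, j) ≠ 0} ≤ m := fun i =>
    (card_le_card fun j => by simpa [P] using fun h _ => h).trans (hrow i)
  have hcol' : ∀ j, #{i | P' (j, i) ≠ 0} ≤ m := fun j =>
    (card_le_card fun i => by simpa [P', P] using fun h _ => h).trans (hcol j)
  have h1 := lnEntropy_fst_le hP
  have h2 := lnEntropy_fst_le hP'
  have h3 := lnEntropy_le_lnEntropy_fst_add hP hrow'
  have h4 := lnEntropy_le_lnEntropy_fst_add hP' hcol'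
  rw [hfst] at h1 h3
  rw [hsnd] at h2 h4
  rw [hmass] at h3
  rw [hmass'] at h4
  rw [abs_sub_le_iff]
  constructor <;> linarith

/-- Subadditivity of entropy, from Gibbs' inequality against the product of the marginals. -/
lemma lnEntropy_le_sum_lnEntropy_marginal {ι γ : Type*} [Fintype ι] [DecidableEq ι]
    [Fintype γ] [DecidableEq γ] {P : (ι → γ) → ℝ} (hP : IsProbVec P) :
    lnEntropy P ≤ ∑ i, lnEntropy (fun v => ∑ F with F i = v, P F) := by
  set ρ : ι → γ → ℝ := fun i v => ∑ F with F i = v, P F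
  have hρ0 : ∀ i v, 0 ≤ ρ i v := fun i v => sum_nonneg fun F _ => hP.1 F
  have hPρ : ∀ i F, P F ≤ ρ i (F i) := fun i F =>
    single_le_sum (fun F' _ => hP.1 F') (by simp)
  have hsupp : ∀ F, P F ≠ 0 → ∀ i, ρ i (F i) ≠ 0 := fun F h i =>
    (((hP.1 F).lt_of_ne (Ne.symm h)).trans_le (hPρ i F)).ne'
  have hq1 : ∑ F : ι → γ, ∏ i, ρ i (F i) = 1 := by
    rw [← Fintype.prod_sum]
    refine prod_eq_one fun i _ => ?_
    rw [← hP.2, ← sum_fiberwise univ (fun F => F i) P]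
  have hfiber : ∀ i, ∑ F, P F * log (ρ i (F i)) = ∑ v, ρ i v * log (ρ i v) := fun i => by
    rw [← sum_fiberwise univ (fun F => F i)]
    refine sum_congr rfl fun v _ => ?_
    rw [sum_mul]
    exact sum_congr rfl fun F hF => by rw [(mem_filter.1 hF).2]
  have hq0 : ∀ F : ι → γ, 0 ≤ ∏ i, ρ i (F i) := fun F => prod_nonneg fun i _ => hρ0 i (F i)
  have hdom : ∀ F : ι → γ, P F ≠ 0 → ∏ i, ρ i (F i) ≠ 0 := fun F h =>
    prod_ne_zero_iff.2 fun i _ => hsupp F h i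
  refine (lnEntropy_le_neg_sum_mul_log hP hq0 hq1.le hdom).trans_eq ?_
  calc -∑ F, P F * log (∏ i, ρ i (F i)) = -∑ F, ∑ i, P F * log (ρ i (F i)) := by
        congr 1
        refine sum_congr rfl fun F _ => ?_
        by_cases h : P F = 0
        · simp [h]
        · rw [log_prod fun i _ => hsupp F h i, mul_sum]
    _ = ∑ i, lnEntropy (ρ i) := by
        rw [sum_comm, ← sum_neg_distrib]
        simp only [hfiber, lnEntropy, negMulLog, neg_mul, sum_neg_distrib]

/-- Concavity of entropy: Jensen's inequality for `negMulLog` in each coordinate. -/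
lemma sum_lnEntropy_le_card_mul {ι Ω : Type*} [Fintype ι] [Fintype Ω] {ρ : ι → Ω → ℝ}
    (hρ : ∀ i w, 0 ≤ ρ i w) {μ : Ω → ℝ} (hμ : ∀ w, ∑ i, ρ i w = Fintype.card ι * μ w) :
    ∑ i, lnEntropy (ρ i) ≤ Fintype.card ι * lnEntropy μ := by
  rcases isEmpty_or_nonempty ι with hι | hι
  · simp
  have hN : (0 : ℝ) < Fintype.card ι := by exact_mod_cast Fintype.card_pos
  simp only [lnEntropy, mul_sum]
  rw [sum_comm]
  refine sum_le_sum fun w _ => ?_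
  have hjensen := concaveOn_negMulLog.le_map_sum (t := univ)
    (w := fun _ => (Fintype.card ι : ℝ)⁻¹) (p := fun i => ρ i w)
    (fun _ _ => by positivity) (by simp [hN.ne']) (fun i _ => hρ i w)
  simp only [smul_eq_mul, ← mul_sum, hμ w, inv_mul_cancel_left₀ hN.ne'] at hjensen
  calc ∑ i, negMulLog (ρ i w)
      = Fintype.card ι * ((Fintype.card ι : ℝ)⁻¹ * ∑ i, negMulLog (ρ i w)) := by field_simp
    _ ≤ Fintype.card ι * negMulLog (μ w) := by gcongr

section EmpiricalFrequency

variable {α β : Type*} [DecidableEq α] [DecidableEq β]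

noncomputable def empFreq (x : ℕ → α) (n : ℕ) (a : α) : ℝ := #{j ∈ range n | x j = a} / n

def blocks (l : ℕ) (S : ℕ → α) (j : ℕ) : Fin l → α := fun t => S (j * l + t)

lemma blockFreq_eq_empFreq (k l : ℕ) (S : ℕ → Fin k) :
    blockFreq k l S = empFreq (blocks l S) := by
  ext n w
  simp only [blockFreq, empFreq, blocks, funext_iff]

lemma empFreq_nonneg (x : ℕ → α) (n : ℕ) (a : α) : 0 ≤ empFreq x n a := by
  unfold empFreq; positivity

lemma empFreq_le_one (x : ℕ → α) (n : ℕ) (a : α) : empFreq x n a ≤ 1 :=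
  div_le_one_of_le₀ (by exact_mod_cast (card_filter_le _ _).trans (card_range n).le)
    (Nat.cast_nonneg n)

lemma empFreq_zero (x : ℕ → α) : empFreq x 0 = 0 := by
  ext; simp [empFreq]

lemma empFreq_comp_equiv (e : α ≃ β) (x : ℕ → α) (n : ℕ) :
    empFreq (e ∘ x) n = empFreq x n ∘ e.symm := by
  ext b
  simp only [empFreq, Function.comp_apply, ← Equiv.eq_symm_apply]

lemma sum_empFreq_fiber [Fintype α] (g : α → β) (x : ℕ → α) (n : ℕ) (b : β) :
    ∑ a with g a = b, empFreq x n a = empFreq (g ∘ x) n b := by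
  simp only [empFreq, ← sum_div, Function.comp_apply]
  congr 1
  rw [card_eq_sum_card_fiberwise (f := x) (t := {a | g a = b})
    fun j hj => mem_filter.2 ⟨mem_univ _, (mem_filter.1 hj).2⟩, Nat.cast_sum]
  refine sum_congr rfl fun a ha => ?_
  rw [filter_filter]
  congr 2
  refine filter_congr fun j _ => ⟨fun h => ⟨?_, h⟩, And.right⟩
  rw [h]
  exact (mem_filter.1 ha).2

lemma isProbVec_empFreq [Fintype α] (x : ℕ → α) {n : ℕ} (hn : n ≠ 0) :
    IsProbVec (empFreq x n) := by
  refine ⟨empFreq_nonneg x n, ?_⟩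
  simp only [empFreq, ← sum_div]
  rw [← Nat.cast_sum, ← card_eq_sum_card_fiberwise fun j _ => mem_univ (x j), card_range,
    div_self (Nat.cast_ne_zero.2 hn)]

lemma empFreq_add (x : ℕ → α) (n d : ℕ) :
    empFreq x (n + d) = fun a =>
      n / (n + d) * empFreq x n a + d / (n + d) * empFreq (fun j => x (n + j)) d a := by
  ext a
  have hcount : #{j ∈ range (n + d) | x j = a} = #{j ∈ range n | x j = a}
      + #{j ∈ range d | x (n + j) = a} := by
    simp only [card_filter, sum_range_add]
  rcases Nat.eq_zero_or_pos (n + d) with h | h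
  · obtain ⟨rfl, rfl⟩ : n = 0 ∧ d = 0 := by omega
    simp [empFreq]
  have h' : (n + d : ℝ) ≠ 0 := by exact_mod_cast h.ne'
  simp only [empFreq, hcount, Nat.cast_add]
  rcases Nat.eq_zero_or_pos n with rfl | hn
  · simp [show d ≠ 0 by omega]
  rcases Nat.eq_zero_or_pos d with rfl | hd
  · simp [hn.ne']
  field_simp

lemma sum_range_mul_eq_sum_fin {M : Type*} [AddCommMonoid M] (f : ℕ → M) (m n : ℕ) :
    ∑ j ∈ range (n * m), f j = ∑ i : Fin m, ∑ j ∈ range n, f (j * m + i) := by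
  induction n with
  | zero => simp
  | succ n ih =>
    simp only [add_one_mul, sum_range_add, ih, sum_range_succ, sum_add_distrib,
      Fin.sum_univ_eq_sum_range (fun i => f (n * m + i))]

lemma sum_empFreq_comp_mul_add (x : ℕ → α) (m n : ℕ) (a : α) :
    ∑ i : Fin m, empFreq (fun j => x (j * m + i)) n a = m * empFreq x (n * m) a := by
  have hcount : #{j ∈ range (n * m) | x j = a}
      = ∑ i : Fin m, #{j ∈ range n | x (j * m + i) = a} := by
    simp only [card_filter, sum_range_mul_eq_sum_fin _ m n]
  simp only [empFreq, ← sum_div, hcount, Nat.cast_sum, Nat.cast_mul]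
  rcases Nat.eq_zero_or_pos m with rfl | hm
  · simp
  rcases Nat.eq_zero_or_pos n with rfl | hn
  · simp
  field_simp

end EmpiricalFrequency

section EmpiricalEntropy

variable {α : Type*} [Fintype α] [DecidableEq α]

lemma lnEntropy_empFreq_nonneg (x : ℕ → α) (n : ℕ) : 0 ≤ lnEntropy (empFreq x n) :=
  lnEntropy_nonneg (empFreq_nonneg x n) (empFreq_le_one x n)

lemma lnEntropy_empFreq_le_log_card (x : ℕ → α) (n : ℕ) :
    lnEntropy (empFreq x n) ≤ log (Fintype.card α) := by
  rcases eq_or_ne n 0 with rfl | hn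
  · simpa [empFreq_zero, lnEntropy] using log_natCast_nonneg _
  · exact lnEntropy_le_log_card (isProbVec_empFreq x hn)

lemma lnEntropy_empFreq_tuples_le (x : ℕ → α) (m n : ℕ) :
    lnEntropy (empFreq (fun j (i : Fin m) => x (j * m + i)) n)
      ≤ m * lnEntropy (empFreq x (n * m)) := by
  rcases eq_or_ne n 0 with rfl | hn
  · simp [empFreq_zero, lnEntropy]
  calc lnEntropy (empFreq (fun j (i : Fin m) => x (j * m + i)) n)
      ≤ ∑ i, lnEntropy (fun v => ∑ F with F i = v,
          empFreq (fun j (i : Fin m) => x (j * m + i)) n F) :=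
        lnEntropy_le_sum_lnEntropy_marginal (isProbVec_empFreq _ hn)
    _ = ∑ i : Fin m, lnEntropy (empFreq (fun j => x (j * m + i)) n) := by
        simp only [sum_empFreq_fiber (fun F : Fin m → α => F _)]
        rfl
    _ ≤ m * lnEntropy (empFreq x (n * m)) := by
        simpa using sum_lnEntropy_le_card_mul (ρ := fun i : Fin m => empFreq _ n)
          (fun i => empFreq_nonneg _ n)
          (fun a => by rw [Fintype.card_fin]; exact sum_empFreq_comp_mul_add x m n a)

lemma negMulLog_le_two_mul_sqrt {x : ℝ} (hx : 0 ≤ x) : negMulLog x ≤ 2 * √x := by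
  have hs := sqrt_nonneg x
  calc negMulLog x = 2 * √x * negMulLog √x := by
        rw [← mul_self_sqrt hx, negMulLog_mul, sqrt_mul_self hs]; ring
    _ ≤ 2 * √x * (1 - √x) := by gcongr; exact negMulLog_le_one_sub_self hs
    _ ≤ 2 * √x := by nlinarith

/-- The extended sample's distribution is the mixture of the old one and that of the appended
terms with weights `n / (n + d)` and `d / (n + d)`; mixing costs at most the entropy of the
weights. -/
lemma lnEntropy_empFreq_add_le (x : ℕ → α) {n : ℕ} (hn : 0 < n) {d m : ℕ} (hd : d ≤ m) :
    lnEntropy (empFreq x (n + d)) ≤ lnEntropy (empFreq x n)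
      + m / n * (log (Fintype.card α) + 1) + 2 * √(m / n) := by
  set y : ℕ → α := fun j => x (n + j)
  set a : ℝ := n / (n + d)
  set b : ℝ := d / (n + d)
  have hnR : (0 : ℝ) < n := by exact_mod_cast hn
  have ha0 : 0 ≤ a := by positivity
  have hb0 : 0 ≤ b := by positivity
  have hab : a + b = 1 := by rw [← add_div]; exact div_self (by positivity)
  have hbm : b ≤ m / n := div_le_div₀ (by positivity) (by exact_mod_cast hd) hnR (by simp)
  have hp := isProbVec_empFreq x hn.ne'
  have hqsum : ∑ w, empFreq y d w ≤ 1 := by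
    rcases eq_or_ne d 0 with rfl | hd0
    · simp [empFreq_zero]
    · exact (isProbVec_empFreq y hd0).2.le
  have h1 : a * lnEntropy (empFreq x n) ≤ lnEntropy (empFreq x n) :=
    mul_le_of_le_one_left (lnEntropy_empFreq_nonneg x n) (by linarith)
  have h2 : b * lnEntropy (empFreq y d) ≤ m / n * log (Fintype.card α) :=
    mul_le_mul hbm (lnEntropy_empFreq_le_log_card y d) (lnEntropy_empFreq_nonneg y d)
      (by positivity)
  have h3 : (∑ w, empFreq x n w) * negMulLog a ≤ m / n := by
    rw [hp.2, one_mul]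
    linarith [negMulLog_le_one_sub_self ha0]
  have h4 : (∑ w, empFreq y d w) * negMulLog b ≤ 2 * √(m / n) :=
    calc (∑ w, empFreq y d w) * negMulLog b ≤ negMulLog b :=
          mul_le_of_le_one_left (negMulLog_nonneg hb0 (by linarith)) hqsum
      _ ≤ 2 * √b := negMulLog_le_two_mul_sqrt hb0
      _ ≤ 2 * √(m / n) := by gcongr
  rw [empFreq_add]
  linarith [lnEntropy_add_le (empFreq_nonneg x n) (empFreq_nonneg y d) ha0 hb0]

end EmpiricalEntropy

/-- Round an `n` with `h n` close to `liminf h` up to the next multiple of `m`. -/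
lemma frequently_comp_mul_lt_of_liminf_lt {h E : ℕ → ℝ} {m : ℕ} (hm : 0 < m)
    (hh : IsCoboundedUnder (· ≥ ·) atTop h) (hE : Tendsto E atTop (𝓝 0))
    (hstep : ∀ n d, 0 < n → d ≤ m → h (n + d) ≤ h n + E n) {b : ℝ}
    (hb : liminf h atTop < b) :
    ∃ᶠ j in atTop, h (j * m) < b := by
  set ε := (b - liminf h atTop) / 2
  have hε : 0 < ε := by simp only [ε]; linarith
  have hlow : ∃ᶠ n in atTop, h n < liminf h atTop + ε :=
    frequently_lt_of_liminf_lt hh (by linarith)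
  have hsmall : ∀ᶠ n in atTop, 0 < n ∧ E n < ε :=
    (eventually_gt_atTop 0).and (hE.eventually (gt_mem_nhds hε))
  have hround : ∃ᶠ n in atTop, h ((n / m + 1) * m) < b := by
    refine (hlow.and_eventually hsmall).mono fun n ⟨hn, hpos, hEn⟩ => ?_
    have hlt := Nat.lt_div_mul_add (a := n) hm
    have hle := Nat.div_mul_le_self n m
    have hround : (n / m + 1) * m = n + ((n / m + 1) * m - n) := by rw [add_one_mul]; omega
    rw [hround]
    have := hstep n ((n / m + 1) * m - n) hpos (by rw [add_one_mul]; omega)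
    simp only [ε] at hn hEn
    linarith
  have htends : Tendsto (fun n => n / m + 1) atTop atTop :=
    (tendsto_add_atTop_nat 1).comp (Nat.tendsto_div_const_atTop hm.ne')
  exact htends.frequently hround

lemma liminf_le_liminf_add_limsup {u v g : ℕ → ℝ} (hu : IsBoundedUnder (· ≥ ·) atTop u)
    (hv : IsBoundedUnder (· ≥ ·) atTop v) (hv' : IsBoundedUnder (· ≤ ·) atTop v)
    (hg : IsBoundedUnder (· ≥ ·) atTop g) (hg' : IsBoundedUnder (· ≤ ·) atTop g)
    (h : ∀ n, u n ≤ v n + g n) :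
    liminf u atTop ≤ liminf v atTop + limsup g atTop := by
  have hvg : IsCoboundedUnder (· ≥ ·) atTop (g + v) :=
    (isBoundedUnder_le_add hg' hv').isCoboundedUnder_ge
  calc liminf u atTop ≤ liminf (g + v) atTop :=
        liminf_le_liminf (Eventually.of_forall fun n => by linarith [h n, Pi.add_apply g v n])
          hu hvg
    _ ≤ limsup g atTop + liminf v atTop := liminf_add_le hg hg' hv hv'.isCoboundedUnder_ge
    _ = liminf v atTop + limsup g atTop := add_comm _ _

lemma shannonEntropy_eq_lnEntropy_div {Ω : Type*} [Fintype Ω] (p : Ω → ℝ) :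
    shannonEntropy p = lnEntropy p / log 2 := by
  rw [shannonEntropy, lnEntropy, sum_div]
  refine sum_congr rfl fun w _ => ?_
  split_ifs with h
  · simp [h]
  · rw [logb, log_inv, negMulLog]; ring

lemma logb_two_natCast_nonneg (n : ℕ) : 0 ≤ logb 2 n :=
  div_nonneg (log_natCast_nonneg n) (log_nonneg one_le_two)

section Dispersion

variable {Ω : Type*} [Fintype Ω]

lemma logDisp_nonneg (p q : Ω → ℝ) : 0 ≤ logDisp p q :=
  logb_two_natCast_nonneg _

lemma DispWitness.card {m : ℕ} {A : Matrix Ω Ω ℝ} {p q : Ω → ℝ} (hA : DispWitness m A p q) :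
    DispWitness (Fintype.card Ω) A p q :=
  ⟨hA.1, hA.2.1, hA.2.2.1, fun _ => card_filter_le _ _, fun _ => card_filter_le _ _⟩

lemma logDisp_le_logb_card [Nonempty Ω] (p q : Ω → ℝ) :
    logDisp p q ≤ logb 2 (Fintype.card Ω) := by
  unfold logDisp
  rcases Set.eq_empty_or_nonempty {m : ℕ | 0 < m ∧ ∃ A, DispWitness m A p q} with h | h
  · rw [h, Nat.sInf_empty, Nat.cast_zero, logb_zero]
    exact logb_two_natCast_nonneg _
  obtain ⟨hpos, A, hA⟩ := Nat.sInf_mem h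
  have hcard : Fintype.card Ω ∈ {m : ℕ | 0 < m ∧ ∃ A, DispWitness m A p q} :=
    ⟨Fintype.card_pos, A, hA.card⟩
  exact logb_le_logb_of_le one_lt_two (by exact_mod_cast hpos)
    (by exact_mod_cast Nat.sInf_le hcard)

lemma abs_shannonEntropy_sub_le_logDisp [Nonempty Ω] {p q : Ω → ℝ} (hp : IsProbVec p)
    (hq : IsProbVec q) : |shannonEntropy p - shannonEntropy q| ≤ logDisp p q := by
  have hrank_one : DispWitness (Fintype.card Ω) (Matrix.of fun i _ => q i) p q :=
    ⟨fun i _ => hq.1 i, fun _ => hq.2,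
      funext fun i => by simp [Matrix.mulVec, dotProduct, ← mul_sum, hp.2],
      fun _ => card_filter_le _ _, fun _ => card_filter_le _ _⟩
  obtain ⟨-, A, hA⟩ := Nat.sInf_mem (s := {m : ℕ | 0 < m ∧ ∃ A, DispWitness m A p q})
    ⟨_, Fintype.card_pos, _, hrank_one⟩
  rw [shannonEntropy_eq_lnEntropy_div, shannonEntropy_eq_lnEntropy_div, ← sub_div, abs_div,
    abs_of_pos (log_pos one_lt_two), logDisp, logb]
  exact div_le_div_of_nonneg_right (abs_lnEntropy_sub_le_log hp hA) (log_nonneg one_le_two)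

end Dispersion

section BlockEntropy

variable {k : ℕ}

lemma shannonEntropy_blockFreq_nonneg (l : ℕ) (S : ℕ → Fin k) (n : ℕ) :
    0 ≤ shannonEntropy (blockFreq k l S n) := by
  rw [shannonEntropy_eq_lnEntropy_div, blockFreq_eq_empFreq]
  exact div_nonneg (lnEntropy_empFreq_nonneg _ n) (log_nonneg one_le_two)

lemma logb_card_fin_fun (k l : ℕ) : logb 2 (Fintype.card (Fin l → Fin k)) = l * logb 2 k := by
  rw [Fintype.card_fun, Fintype.card_fin, Fintype.card_fin, Nat.cast_pow, logb_pow]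

lemma shannonEntropy_blockFreq_le (l : ℕ) (S : ℕ → Fin k) (n : ℕ) :
    shannonEntropy (blockFreq k l S n) ≤ l * logb 2 k := by
  rw [shannonEntropy_eq_lnEntropy_div, blockFreq_eq_empFreq, ← logb_card_fin_fun, logb]
  exact div_le_div_of_nonneg_right (lnEntropy_empFreq_le_log_card _ n) (log_nonneg one_le_two)

lemma abs_shannonEntropy_blockFreq_sub_le (l : ℕ) (S T : ℕ → Fin k) (n : ℕ) :
    |shannonEntropy (blockFreq k l S n) - shannonEntropy (blockFreq k l T n)|
      ≤ logDisp (blockFreq k l S n) (blockFreq k l T n) := by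
  have : Nonempty (Fin l → Fin k) := ⟨fun _ => S 0⟩
  rcases eq_or_ne n 0 with rfl | hn
  · simpa [blockFreq_eq_empFreq, empFreq_zero] using logDisp_nonneg _ _
  · rw [blockFreq_eq_empFreq, blockFreq_eq_empFreq]
    exact abs_shannonEntropy_sub_le_logDisp (isProbVec_empFreq _ hn) (isProbVec_empFreq _ hn)

lemma logDisp_blockFreq_le (l : ℕ) (S T : ℕ → Fin k) (n : ℕ) :
    logDisp (blockFreq k l S n) (blockFreq k l T n) ≤ l * logb 2 k := by
  have : Nonempty (Fin l → Fin k) := ⟨fun _ => S 0⟩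
  exact (logDisp_le_logb_card _ _).trans_eq (logb_card_fin_fun k l)

lemma shannonEntropy_blockFreq_mul_le (l m : ℕ) (S : ℕ → Fin k) (n : ℕ) :
    shannonEntropy (blockFreq k (m * l) S n) ≤ m * shannonEntropy (blockFreq k l S (n * m)) := by
  let e : (Fin (m * l) → Fin k) ≃ (Fin m → Fin l → Fin k) :=
    (finProdFinEquiv.symm.arrowCongr (Equiv.refl _)).trans (Equiv.curry _ _ _)
  have he : e ∘ blocks (m * l) S = fun j (i : Fin m) => blocks l S (j * m + i) := by
    funext j i t
    simp only [e, blocks, Function.comp_apply, Equiv.trans_apply, Equiv.arrowCongr_apply,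
      Equiv.curry_apply, Equiv.coe_refl, Function.comp_apply, Equiv.symm_symm, id,
      Function.curry_apply, finProdFinEquiv_apply_val]
    congr 1
    ring
  rw [shannonEntropy_eq_lnEntropy_div, shannonEntropy_eq_lnEntropy_div, blockFreq_eq_empFreq,
    blockFreq_eq_empFreq, ← lnEntropy_comp_equiv _ e.symm, ← empFreq_comp_equiv, he,
    ← mul_div_assoc]
  exact div_le_div_of_nonneg_right (lnEntropy_empFreq_tuples_le _ m n) (log_nonneg one_le_two)

lemma isBoundedUnder_shannonEntropy_blockFreq (l : ℕ) (S : ℕ → Fin k) :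
    IsBoundedUnder (· ≤ ·) atTop fun n => shannonEntropy (blockFreq k l S n) :=
  isBoundedUnder_of ⟨_, shannonEntropy_blockFreq_le l S⟩

lemma isBoundedUnder_ge_shannonEntropy_blockFreq (l : ℕ) (S : ℕ → Fin k) :
    IsBoundedUnder (· ≥ ·) atTop fun n => shannonEntropy (blockFreq k l S n) :=
  isBoundedUnder_of ⟨0, shannonEntropy_blockFreq_nonneg l S⟩

lemma liminf_shannonEntropy_blockFreq_mul_le (l : ℕ) {m : ℕ} (hm : 0 < m) (S : ℕ → Fin k) :
    liminf (fun n => shannonEntropy (blockFreq k (m * l) S n)) atTop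
      ≤ m * liminf (fun n => shannonEntropy (blockFreq k l S n)) atTop := by
  set E : ℕ → ℝ := fun n =>
    (m / n * (log (Fintype.card (Fin l → Fin k)) + 1) + 2 * √(m / n)) / log 2
  have hE : Tendsto E atTop (𝓝 0) := by
    have hmn := tendsto_const_div_atTop_nhds_zero_nat (m : ℝ)
    simpa [E] using ((hmn.mul_const _).add (hmn.sqrt.const_mul 2)).div_const (log 2)
  have hstep : ∀ n d, 0 < n → d ≤ m → shannonEntropy (blockFreq k l S (n + d))
      ≤ shannonEntropy (blockFreq k l S n) + E n := fun n d hn hd => by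
    simp only [shannonEntropy_eq_lnEntropy_div, blockFreq_eq_empFreq, E, ← add_div]
    gcongr
    linarith [lnEntropy_empFreq_add_le (blocks l S) hn hd]
  have hmR : (0 : ℝ) < m := by exact_mod_cast hm
  refine le_of_forall_gt_imp_ge_of_dense fun b hb => ?_
  have hfreq := frequently_comp_mul_lt_of_liminf_lt hm
    (isBoundedUnder_shannonEntropy_blockFreq l S).isCoboundedUnder_ge hE hstep
    (b := b / m) (by rwa [lt_div_iff₀' hmR])
  refine liminf_le_of_frequently_le (hfreq.mono fun j hj => ?_)
    (isBoundedUnder_ge_shannonEntropy_blockFreq _ S)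
  calc shannonEntropy (blockFreq k (m * l) S j)
      ≤ m * shannonEntropy (blockFreq k l S (j * m)) := shannonEntropy_blockFreq_mul_le l m S j
    _ ≤ m * (b / m) := by gcongr
    _ = b := mul_div_cancel₀ b hmR.ne'

end BlockEntropy

section Dimension

noncomputable def blockEntropyRate (k l : ℕ) (S : ℕ → Fin k) : ℝ :=
  1 / (l * logb 2 k) * liminf (fun n => shannonEntropy (blockFreq k l S n)) atTop

variable {k : ℕ}

lemma blockEntropyRate_nonneg (l : ℕ) (S : ℕ → Fin k) : 0 ≤ blockEntropyRate k l S :=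
  mul_nonneg (by have := logb_two_natCast_nonneg k; positivity)
    (le_liminf_of_le (isBoundedUnder_shannonEntropy_blockFreq l S).isCoboundedUnder_ge
      (Eventually.of_forall (shannonEntropy_blockFreq_nonneg l S)))

lemma dimFS_eq_iInf_blockEntropyRate (S : ℕ → Fin k) :
    dimFS k S = ⨅ l : ℕ+, blockEntropyRate k l S :=
  rfl

lemma dimFS_le_blockEntropyRate (S : ℕ → Fin k) {l : ℕ} (hl : 0 < l) :
    dimFS k S ≤ blockEntropyRate k l S :=
  ciInf_le (f := fun l : ℕ+ => blockEntropyRate k l S)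
    ⟨0, by rintro _ ⟨l, rfl⟩; exact blockEntropyRate_nonneg l S⟩ ⟨l, hl⟩

lemma blockEntropyRate_mul_le (S : ℕ → Fin k) (l : ℕ) {m : ℕ} (hm : 0 < m) :
    blockEntropyRate k (m * l) S ≤ blockEntropyRate k l S := by
  have hmR : (m : ℝ) ≠ 0 := by exact_mod_cast hm.ne'
  calc blockEntropyRate k (m * l) S
      ≤ 1 / ((m * l : ℕ) * logb 2 k) *
        (m * liminf (fun n => shannonEntropy (blockFreq k l S n)) atTop) := by
        unfold blockEntropyRate
        gcongr
        · have := logb_two_natCast_nonneg k; positivity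
        · exact liminf_shannonEntropy_blockFreq_mul_le l hm S
    _ = blockEntropyRate k l S := by
        rw [blockEntropyRate, one_div_mul_eq_div, one_div_mul_eq_div, Nat.cast_mul,
          mul_assoc (m : ℝ), mul_div_mul_left _ _ hmR]

/-- Push the block length to a multiple of a near-optimal one for `V`, where the normalised
excess `d` is close to its `limsup`. -/
lemma dimFS_le_dimFS_add_limsup {U V : ℕ → Fin k} {G : ℕ → ℕ → ℝ} (hG0 : ∀ l n, 0 ≤ G l n)
    (hG : ∀ l n, G l n ≤ l * logb 2 k)
    (hUV : ∀ l n, shannonEntropy (blockFreq k l U n) ≤ shannonEntropy (blockFreq k l V n) + G l n) :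
    dimFS k U ≤ dimFS k V
      + limsup (fun l : ℕ => 1 / (l * logb 2 k) * limsup (fun n => G l n) atTop) atTop := by
  set d : ℕ → ℝ := fun l => 1 / (l * logb 2 k) * limsup (fun n => G l n) atTop
  have hc : ∀ l : ℕ, 0 ≤ 1 / (l * logb 2 k) := fun l => by
    have := logb_two_natCast_nonneg k; positivity
  have hGbdd : ∀ l, IsBoundedUnder (· ≤ ·) atTop (G l) := fun l => isBoundedUnder_of ⟨_, hG l⟩
  have hGbdd' : ∀ l, IsBoundedUnder (· ≥ ·) atTop (G l) := fun l => isBoundedUnder_of ⟨0, hG0 l⟩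
  have hd : ∀ l, d l ≤ 1 := fun l =>
    calc d l ≤ 1 / (l * logb 2 k) * (l * logb 2 k) := mul_le_mul_of_nonneg_left
          (limsup_le_of_le (hGbdd' l).isCoboundedUnder_le (Eventually.of_forall (hG l))) (hc l)
      _ ≤ 1 := by rw [one_div]; exact inv_mul_le_one
  have hUV' : ∀ l, blockEntropyRate k l U ≤ blockEntropyRate k l V + d l := fun l => by
    rw [blockEntropyRate, blockEntropyRate, ← mul_add]
    exact mul_le_mul_of_nonneg_left (liminf_le_liminf_add_limsup
      (isBoundedUnder_ge_shannonEntropy_blockFreq l U)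
      (isBoundedUnder_ge_shannonEntropy_blockFreq l V)
      (isBoundedUnder_shannonEntropy_blockFreq l V) (hGbdd' l) (hGbdd l) (hUV l)) (hc l)
  refine le_of_forall_pos_le_add fun ε hε => ?_
  obtain ⟨N, hN⟩ := eventually_atTop.1 (eventually_lt_of_limsup_lt
    (lt_add_of_pos_right (limsup d atTop) hε) (isBoundedUnder_of ⟨1, hd⟩))
  have hbound : ∀ l : ℕ+, dimFS k U - (limsup d atTop + ε) ≤ blockEntropyRate k l V := by
    intro l
    have hlarge : N ≤ (N + 1) * l := by nlinarith [l.pos]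
    linarith [dimFS_le_blockEntropyRate U (Nat.mul_pos N.succ_pos l.pos),
      hUV' ((N + 1) * l), hN _ hlarge, blockEntropyRate_mul_le V l N.succ_pos]
  have hV : dimFS k U - (limsup d atTop + ε) ≤ dimFS k V := by
    rw [dimFS_eq_iInf_blockEntropyRate]
    exact le_ciInf hbound
  linarith

end Dimension

theorem dimFS_deltaPlus_contractive_general (k : ℕ) (S T : ℕ → Fin k) :
    |dimFS k S - dimFS k T| ≤ deltaPlus k S T := by
  have hST := fun l n => abs_le.1 (abs_shannonEntropy_blockFreq_sub_le l S T n)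
  rw [abs_sub_le_iff, sub_le_iff_le_add', sub_le_iff_le_add']
  constructor
  · exact dimFS_le_dimFS_add_limsup (fun _ _ => logDisp_nonneg _ _) (logDisp_blockFreq_le · S T)
      fun l n => by linarith [(hST l n).2]
  · exact dimFS_le_dimFS_add_limsup (fun _ _ => logDisp_nonneg _ _) (logDisp_blockFreq_le · S T)
      fun l n => by linarith [(hST l n).1]

theorem dimFS_deltaPlus_contractive (k : ℕ) (hk : 2 ≤ k) (S T : ℕ → Fin k) :
    |dimFS k S - dimFS k T| ≤ deltaPlus k S T :=
  dimFS_deltaPlus_contractive_general k S T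
end
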